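/- In the formula language above extended with real constants r̄ for every r ∈ [0,1], every formula φ is semantically equivalent to a formula t(φ) containing only rational constants; i.e., there is a translation t such that for every valuation I, eval I φ = eval I (t φ). -/

import Mathlib

/-- Formulas of infinitary propositional Gödel logic with rational and real constants. -/
inductive Fml : Type
  | bot : Fml
  | var (n : ℕ) : Fml
  | imp (φ ψ : Fml) : Fml
  | and (φ ψ : Fml) : Fml
  | iInf (f : ℕ → Fml) : Fml
  | iSup (f : ℕ → Fml) : Fml
  | const (q : ℚ) (hq : 0 ≤ q ∧ q ≤ 1) : Fml
  | rconst (r : ℝ) (hr : 0 ≤ r ∧ r ≤ 1) : Fml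

/-- Extension of a valuation to all formulas, with Gödel semantics. -/
noncomputable def eval (I : ℕ → Set.Icc (0:ℝ) 1) : Fml → ℝ
  | .bot => 0
  | .var n => (I n : ℝ)
  | .imp φ ψ => if eval I φ ≤ eval I ψ then 1 else eval I ψ
  | .and φ ψ => min (eval I φ) (eval I ψ)
  | .iInf f => ⨅ i, eval I (f i)
  | .iSup f => ⨆ i, eval I (f i)
  | .const q _ => (q : ℝ)
  | .rconst r _ => r

/-- A formula contains only rational constants (no real-constant construct). -/
def RatOnly : Fml → Prop
  | .bot => True
  | .var _ => True
  | .imp φ ψ => RatOnly φ ∧ RatOnly ψ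
  | .and φ ψ => RatOnly φ ∧ RatOnly ψ
  | .iInf f => ∀ i, RatOnly (f i)
  | .iSup f => ∀ i, RatOnly (f i)
  | .const _ _ => True
  | .rconst _ _ => False

noncomputable def ratLowerApprox (r : ℝ) (n : ℕ) : ℚ := ⌊r * (n + 1)⌋ / (n + 1)

lemma ratLowerApprox_cast (r : ℝ) (n : ℕ) :
    (ratLowerApprox r n : ℝ) = ⌊r * (n + 1)⌋ / (n + 1) := by
  simp [ratLowerApprox]

lemma ratLowerApprox_nonneg {r : ℝ} (hr : 0 ≤ r) (n : ℕ) : 0 ≤ ratLowerApprox r n :=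
  div_nonneg (Int.cast_nonneg (Int.floor_nonneg.2 (by positivity))) (by positivity)

lemma ratLowerApprox_le (r : ℝ) (n : ℕ) : (ratLowerApprox r n : ℝ) ≤ r := by
  rw [ratLowerApprox_cast, div_le_iff₀ (by positivity)]
  exact Int.floor_le _

lemma sub_one_div_lt_ratLowerApprox (r : ℝ) (n : ℕ) :
    r - 1 / (n + 1) < ratLowerApprox r n := by
  have hn : (0 : ℝ) < n + 1 := by positivity
  rw [ratLowerApprox_cast, lt_div_iff₀ hn, sub_mul, one_div_mul_cancel hn.ne']
  exact Int.sub_one_lt_floor _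

lemma iSup_ratLowerApprox (r : ℝ) : ⨆ n, (ratLowerApprox r n : ℝ) = r := by
  refine ciSup_eq_of_forall_le_of_forall_lt_exists_gt (ratLowerApprox_le r) fun w hw => ?_
  obtain ⟨n, hn⟩ := exists_nat_one_div_lt (sub_pos.2 hw)
  exact ⟨n, by linarith [sub_one_div_lt_ratLowerApprox r n]⟩

lemma ratLowerApprox_mem_unitInterval {r : ℝ} (hr : 0 ≤ r ∧ r ≤ 1) (n : ℕ) :
    0 ≤ ratLowerApprox r n ∧ ratLowerApprox r n ≤ 1 :=
  ⟨ratLowerApprox_nonneg hr.1 n, by exact_mod_cast (ratLowerApprox_le r n).trans hr.2⟩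

noncomputable def elimRealConst : Fml → Fml
  | .bot => .bot
  | .var n => .var n
  | .imp φ ψ => .imp (elimRealConst φ) (elimRealConst ψ)
  | .and φ ψ => .and (elimRealConst φ) (elimRealConst ψ)
  | .iInf f => .iInf fun i => elimRealConst (f i)
  | .iSup f => .iSup fun i => elimRealConst (f i)
  | .const q hq => .const q hq
  | .rconst r hr =>
      .iSup fun n => .const (ratLowerApprox r n) (ratLowerApprox_mem_unitInterval hr n)

lemma ratOnly_elimRealConst : ∀ φ, RatOnly (elimRealConst φ)
  | .bot | .var _ | .const _ _ => trivial
  | .imp φ ψ | .and φ ψ => ⟨ratOnly_elimRealConst φ, ratOnly_elimRealConst ψ⟩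
  | .iInf f | .iSup f => fun i => ratOnly_elimRealConst (f i)
  | .rconst _ _ => fun _ => trivial

lemma eval_elimRealConst (I : ℕ → Set.Icc (0:ℝ) 1) :
    ∀ φ, eval I (elimRealConst φ) = eval I φ
  | .bot | .var _ | .const _ _ => rfl
  | .imp φ ψ | .and φ ψ => by
      simp only [elimRealConst, eval, eval_elimRealConst I φ, eval_elimRealConst I ψ]
  | .iInf f | .iSup f => by
      simp only [elimRealConst, eval, eval_elimRealConst I (f _)]
  | .rconst r _ => iSup_ratLowerApprox r

theorem exists_translation_eliminating_real_constants :
    ∃ t : Fml → Fml, (∀ φ, RatOnly (t φ)) ∧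
      ∀ (I : ℕ → Set.Icc (0:ℝ) 1) (φ : Fml), eval I φ = eval I (t φ) :=
  ⟨elimRealConst, ratOnly_elimRealConst, fun I φ => (eval_elimRealConst I φ).symm⟩
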